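/- Fix an integer s_0 ≥ 1 and 1 ≤ k ≤ d, and let A_k(s_0) := {ν ∈ N : ⟨ν, e_i⟩ > 0 for all 1 ≤ i ≤ d and φ_k(ν) ≤ s_0 < φ_{k+1}(ν)}. Define ν ∼ ν' for ν, ν' ∈ A_k(s_0) if for every 1 ≤ j ≤ k one has ord_{J_j}(ν) = ord_{J_j}(ν') and {w ∈ J_j : ⟨ν, w⟩ = ord_{J_j}(ν)} = {w ∈ J_j : ⟨ν', w⟩ = ord_{J_j}(ν')}. Then ∼ is an equivalence relation on A_k(s_0) with only finitely many equivalence classes. -/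

import Mathlib

open scoped BigOperators Classical

namespace QO

/-- The standard pairing `⟨ν, m⟩ = ∑ i, ν i * m i` on `ℚ^d`. -/
def pair (d : ℕ) (ν m : Fin d → ℚ) : ℚ := ∑ i, ν i * m i

/-- `E d lam i` is the `i`-th standard basis vector of `ℚ^d` for `1 ≤ i ≤ d`,
and equals the characteristic exponent `λ_{i-d}` for `d + 1 ≤ i` (1-based indexing). -/
def E (d : ℕ) (lam : ℕ → Fin d → ℚ) (i : ℕ) : Fin d → ℚ :=
  if 1 ≤ i ∧ i ≤ d then (fun j => if (j : ℕ) = i - 1 then 1 else 0) else lam (i - d)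

/-- The lattice `M_j = ℤ^d + ℤλ_1 + ⋯ + ℤλ_j`, as an additive subgroup of `ℚ^d`. -/
def Mlat (d : ℕ) (lam : ℕ → Fin d → ℚ) : ℕ → AddSubgroup (Fin d → ℚ)
  | 0 => AddSubgroup.closure (Set.range fun i : Fin d => (fun j => if j = i then (1 : ℚ) else 0))
  | (j + 1) => Mlat d lam j ⊔ AddSubgroup.closure {lam (j + 1)}

/-- The dual lattice `N` of `M = M_g`. -/
def Ndual (d g : ℕ) (lam : ℕ → Fin d → ℚ) : Set (Fin d → ℚ) :=
  { ν | ∀ m ∈ Mlat d lam g, ∃ z : ℤ, pair d ν m = (z : ℚ) }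

/-- Admissible index sets for `J_k`: `k` indices in `{1, …, d+g}`, at most one of which
exceeds `d`, whose associated vectors are linearly independent over `ℚ`. -/
def IdxOk (d g : ℕ) (lam : ℕ → Fin d → ℚ) (k : ℕ) (I : Finset ℕ) : Prop :=
  I.card = k ∧ I ⊆ Finset.Icc 1 (d + g) ∧ (I.filter fun i => d + 1 ≤ i).card ≤ 1 ∧
    LinearIndependent ℚ (fun i : {x // x ∈ I} => E d lam i.1)

/-- The set `J_k` of sums `e_{j_1} + ⋯ + e_{j_k}`. -/
def Jset (d g : ℕ) (lam : ℕ → Fin d → ℚ) (k : ℕ) : Set (Fin d → ℚ) :=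
  { w | ∃ I : Finset ℕ, IdxOk d g lam k I ∧ w = ∑ i ∈ I, E d lam i }

/-- The set `J_k`, as a finite set. -/
noncomputable def Jfin (d g : ℕ) (lam : ℕ → Fin d → ℚ) (k : ℕ) : Finset (Fin d → ℚ) :=
  ((Finset.Icc 1 (d + g)).powerset.filter fun I => IdxOk d g lam k I).image
    fun I => ∑ i ∈ I, E d lam i

/-- The support function `ord_{J_k}(ν) = min_{w ∈ J_k} ⟨ν, w⟩`. -/
noncomputable def ordJ (d g : ℕ) (lam : ℕ → Fin d → ℚ) (k : ℕ) (ν : Fin d → ℚ) : ℚ :=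
  if h : (Jfin d g lam k).Nonempty then ((Jfin d g lam k).image (pair d ν)).min' (h.image _)
  else 0

/-- `φ_k(ν) = ord_{J_k}(ν) - ord_{J_{k-1}}(ν)` (note `ord_{J_0} = 0`, hence also `φ_0 = 0`). -/
noncomputable def phiJ (d g : ℕ) (lam : ℕ → Fin d → ℚ) (k : ℕ) (ν : Fin d → ℚ) : ℚ :=
  ordJ d g lam k ν - ordJ d g lam (k - 1) ν

/-- The sort key of the total order `≤_ν` on the indices `1, …, d+g`: sort by the value
`⟨ν, ·⟩`, breaking ties (in particular ties between an `e_i` with `i ≤ d` and a `λ_j`)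
by the index, so that `e_i` is placed first. -/
noncomputable def keyIdx (d : ℕ) (lam : ℕ → Fin d → ℚ) (ν : Fin d → ℚ) (i : ℕ) : ℚ ×ₗ ℕ :=
  toLex (pair d ν (E d lam i), i)

/-- The `≤_ν`-least element of a finite set of indices. -/
noncomputable def leastIdx (d : ℕ) (lam : ℕ → Fin d → ℚ) (ν : Fin d → ℚ) (S : Finset ℕ) : ℕ :=
  if h : S.Nonempty then (ofLex ((S.image (keyIdx d lam ν)).min' (h.image _))).2 else 0

/-- The `≤_ν`-greatest element of a finite set of indices. -/
noncomputable def greatestIdx (d : ℕ) (lam : ℕ → Fin d → ℚ) (ν : Fin d → ℚ)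
    (S : Finset ℕ) : ℕ :=
  if h : S.Nonempty then (ofLex ((S.image (keyIdx d lam ν)).max' (h.image _))).2 else 0

/-- The `ℚ`-span of the vectors indexed by `I`. -/
def spanOf (d : ℕ) (lam : ℕ → Fin d → ℚ) (I : Finset ℕ) : Submodule ℚ (Fin d → ℚ) :=
  Submodule.span ℚ ((fun i => E d lam i) '' (I : Set ℕ))

/-- `n(k)`: the index `n` such that `λ_n` is a summand of `w_k`, and `0` if there is none. -/
noncomputable def nVal (d : ℕ) (I : Finset ℕ) : ℕ :=
  if h : (I.filter fun i => d + 1 ≤ i).Nonempty then (I.filter fun i => d + 1 ≤ i).min' h - d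
  else 0

/-- `t(k)`: the least `1 ≤ j ≤ g` with `λ_j ∉ ℓ_k(ν)`, and `g + 1` if there is none. -/
noncomputable def tVal (d g : ℕ) (lam : ℕ → Fin d → ℚ) (I : Finset ℕ) : ℕ :=
  if h : ((Finset.Icc 1 g).filter fun j => lam j ∉ spanOf d lam I).Nonempty then
    ((Finset.Icc 1 g).filter fun j => lam j ∉ spanOf d lam I).min' h
  else g + 1

/-- `m(k)`: the index `m` with `({e_1, …, e_d} ∩ ℓ_k(ν)) ∖ {summands of w_k} = {e_m}`,
and `0` if this set is empty. -/
noncomputable def mVal (d : ℕ) (lam : ℕ → Fin d → ℚ) (I : Finset ℕ) : ℕ :=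
  if h : (((Finset.Icc 1 d).filter fun i => E d lam i ∈ spanOf d lam I) \ I).Nonempty then
    (((Finset.Icc 1 d).filter fun i => E d lam i ∈ spanOf d lam I) \ I).min' h
  else 0

/-- `i(k)`: the `≤_ν`-least index `1 ≤ i ≤ d + g` with `w_k + e_i ∈ J_{k+1}`. -/
noncomputable def iVal (d g : ℕ) (lam : ℕ → Fin d → ℚ) (ν : Fin d → ℚ) (k : ℕ)
    (I : Finset ℕ) : ℕ :=
  leastIdx d lam ν ((Finset.Icc 1 (d + g)).filter fun i => IdxOk d g lam (k + 1) (insert i I))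

/-- One step of the algorithm, from the summands of `w_k` to the summands of `w_{k+1}`:
`a_{k+1} = w_k + e_{i(k)}` and `b_{k+1} = w_k - λ_{n(k)} + λ_{t(k)} + e_{m(k)}`; the
candidate `b_{k+1}` is discarded when `m(k) = 0` or `t(k) = g + 1`, and otherwise
`w_{k+1} = a_{k+1}` exactly when `⟨ν, a_{k+1}⟩ ≤ ⟨ν, b_{k+1}⟩`. -/
noncomputable def step (d g : ℕ) (lam : ℕ → Fin d → ℚ) (ν : Fin d → ℚ) (k : ℕ)
    (I : Finset ℕ) : Finset ℕ :=
  let a : Finset ℕ := insert (iVal d g lam ν k I) I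
  let b : Finset ℕ :=
    insert (mVal d lam I) (insert (d + tVal d g lam I)
      (if nVal d I = 0 then I else I.erase (d + nVal d I)))
  if mVal d lam I = 0 ∨ tVal d g lam I = g + 1 then a
  else if pair d ν (∑ i ∈ a, E d lam i) ≤ pair d ν (∑ i ∈ b, E d lam i) then a else b

/-- The index sets `W ν k` of summands of the algorithm's vectors `w_k`; the vector `w_1`
is the `≤_ν`-least element of `{e_1, …, e_d, λ_1}`. -/
noncomputable def W (d g : ℕ) (lam : ℕ → Fin d → ℚ) (ν : Fin d → ℚ) : ℕ → Finset ℕ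
  | 0 => ∅
  | 1 => {leastIdx d lam ν (insert (d + 1) (Finset.Icc 1 d))}
  | (k + 2) => step d g lam ν (k + 1) (W d g lam ν (k + 1))

/-- The algorithm's vector `w_k`. -/
noncomputable def wVec (d g : ℕ) (lam : ℕ → Fin d → ℚ) (ν : Fin d → ℚ) (k : ℕ) :
    Fin d → ℚ :=
  ∑ i ∈ W d g lam ν k, E d lam i

/-- `ℓ_k(ν)`: the `ℚ`-span of the summands of `w_k`. -/
noncomputable def ellK (d g : ℕ) (lam : ℕ → Fin d → ℚ) (ν : Fin d → ℚ) (k : ℕ) :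
    Submodule ℚ (Fin d → ℚ) :=
  spanOf d lam (W d g lam ν k)

/-- `ℓ_ν^s = span_ℚ{e_j : 1 ≤ j < d + t(k), ⟨ν, e_j⟩ ≤ s}`, where `k` is the index with
`φ_k(ν) ≤ s < φ_{k+1}(ν)`. -/
noncomputable def ellS (d g : ℕ) (lam : ℕ → Fin d → ℚ) (ν : Fin d → ℚ) (s : ℚ) (k : ℕ) :
    Submodule ℚ (Fin d → ℚ) :=
  Submodule.span ℚ ((fun i => E d lam i) ''
    { i : ℕ | 1 ≤ i ∧ i < d + tVal d g lam (W d g lam ν k) ∧ pair d ν (E d lam i) ≤ s })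

/-- `p(k)` (with the convention `λ_0 = 0`). -/
noncomputable def pVal (d g : ℕ) (lam : ℕ → Fin d → ℚ) (ν : Fin d → ℚ) (s : ℚ)
    (k : ℕ) : ℕ :=
  if nVal d (W d g lam ν k) = 0 then
    if h : ((Finset.Icc 0 g).filter fun j =>
        pair d ν (if j = 0 then (0 : Fin d → ℚ) else lam j) ≤ s).Nonempty then
      ((Finset.Icc 0 g).filter fun j =>
        pair d ν (if j = 0 then (0 : Fin d → ℚ) else lam j) ≤ s).max' h
    else 0
  else
    (insert (nVal d (W d g lam ν k))
      ((Finset.Ioo (nVal d (W d g lam ν k)) (tVal d g lam (W d g lam ν k))).filter fun j =>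
        mVal d lam (W d g lam ν k) ≠ 0 ∧
          pair d ν (E d lam (mVal d lam (W d g lam ν k)) - lam (nVal d (W d g lam ν k)) + lam j)
            ≤ s)).max' (Finset.insert_nonempty _ _)

/-- `q_η`: the index of the `≤_ν`-greatest element of `{e_1, …, e_d} ∩ ℓ(η)`, where
`ℓ(η) = span_ℚ{e_i : η_i ≠ 0}`. -/
noncomputable def qIdx (d : ℕ) (lam : ℕ → Fin d → ℚ) (ν η : Fin d → ℚ) : ℕ :=
  greatestIdx d lam ν ((Finset.Icc 1 d).filter fun i => pair d η (E d lam i) ≠ 0)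

/-- Membership in the set `A_k(s_0)`: `ν ∈ N`, `⟨ν, e_i⟩ > 0` for all `1 ≤ i ≤ d`, and
`φ_k(ν) ≤ s_0 < φ_{k+1}(ν)` (for `k = d` the upper condition is vacuous). -/
def Acond (d g : ℕ) (lam : ℕ → Fin d → ℚ) (s0 k : ℕ) (ν : Fin d → ℚ) : Prop :=
  ν ∈ Ndual d g lam ∧ (∀ i, 1 ≤ i → i ≤ d → 0 < pair d ν (E d lam i)) ∧
    phiJ d g lam k ν ≤ (s0 : ℚ) ∧ (k < d → (s0 : ℚ) < phiJ d g lam (k + 1) ν)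

/-- The relation `∼`: `ν ∼ ν'` iff for every `1 ≤ j ≤ k`, `ord_{J_j}(ν) = ord_{J_j}(ν')`
and `ν`, `ν'` have the same set of minimizers in `J_j`. -/
def simRel (d g : ℕ) (lam : ℕ → Fin d → ℚ) (k : ℕ) (ν ν' : Fin d → ℚ) : Prop :=
  ∀ j, 1 ≤ j → j ≤ k → ordJ d g lam j ν = ordJ d g lam j ν' ∧
    {w | w ∈ Jset d g lam j ∧ pair d ν w = ordJ d g lam j ν} =
      {w | w ∈ Jset d g lam j ∧ pair d ν' w = ordJ d g lam j ν'}

/-!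
The `∼`-class of `ν` is determined by the numbers `ord_{J_j}(ν)` and the minimiser sets in
`J_j` for `j ≤ k`; the latter are subsets of the finite sets `J_j`, so it suffices to confine
`ord_{J_j}(ν)` to a finite set. It is an integer because `J_j ⊆ M` and `ν ∈ N`, and it is
nonnegative because `ν` and every vector of `J_j` have nonnegative coordinates. It is at most
`j φ_k(ν) ≤ k s_0` because `φ` is nondecreasing on `[1, d]`: by basis exchange, an element of
`J_{j+2}` plus an element of `J_j` is a sum of two elements of `J_{j+1}`, so `j ↦ ord_{J_j}(ν)`
is convex.
-/

theorem Quot.finite_of_finite_range {α β : Type*} {r : α → α → Prop} (f : α → β)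
    (hf : (Set.range f).Finite) (h : ∀ a b, f a = f b → r a b) : Finite (Quot r) := by
  have : Finite (Set.range f) := hf.to_subtype
  refine Finite.of_surjective (fun b : Set.range f => Quot.mk r b.2.choose) ?_
  rintro ⟨a⟩
  exact ⟨⟨f a, a, rfl⟩, Quot.sound (h _ _ (Exists.choose_spec (⟨a, rfl⟩ : ∃ a', f a' = f a)))⟩

section

variable {d g : ℕ} {lam : ℕ → Fin d → ℚ} {ν : Fin d → ℚ} {j : ℕ}

theorem pair_eq_dotProduct (ν w : Fin d → ℚ) : pair d ν w = ν ⬝ᵥ w := rfl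

theorem E_of_le {i : ℕ} (h1 : 1 ≤ i) (h2 : i ≤ d) :
    E d lam i = Pi.single (⟨i - 1, by omega⟩ : Fin d) 1 := by
  funext l
  simp only [E, if_pos (And.intro h1 h2), Pi.single_apply, Fin.ext_iff]

theorem E_of_lt {i : ℕ} (h : d < i) : E d lam i = lam (i - d) := by
  rw [E, if_neg (by omega)]

theorem E_succ (l : Fin d) : E d lam (l + 1) = Pi.single l 1 := by
  rw [E_of_le (by omega) (by omega)]
  rfl

theorem pair_E_succ (l : Fin d) : pair d ν (E d lam (l + 1)) = ν l := by
  rw [E_succ, pair_eq_dotProduct, dotProduct_single, mul_one]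

theorem Mlat_mono : Monotone (Mlat d lam) :=
  monotone_nat_of_le_succ fun _ => le_sup_left

theorem E_mem_Mlat {i : ℕ} (h1 : 1 ≤ i) (h2 : i ≤ d + g) : E d lam i ∈ Mlat d lam g := by
  rcases le_or_gt i d with hid | hid
  · refine Mlat_mono (Nat.zero_le g) (AddSubgroup.subset_closure ⟨⟨i - 1, by omega⟩, ?_⟩)
    rw [E_of_le h1 hid]
    funext l
    simp [Pi.single_apply]
  · obtain ⟨n, hn⟩ : ∃ n, i - d = n + 1 := ⟨i - d - 1, by omega⟩
    rw [E_of_lt hid, hn]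
    exact Mlat_mono (by omega : n + 1 ≤ g)
      (le_sup_right (a := Mlat d lam n) (AddSubgroup.mem_closure_singleton_self _))

theorem sum_mem_Jset {I : Finset ℕ} (h : IdxOk d g lam j I) :
    ∑ i ∈ I, E d lam i ∈ Jset d g lam j :=
  ⟨I, h, rfl⟩

theorem Jset_eq_coe_Jfin (j : ℕ) : Jset d g lam j = ↑(Jfin d g lam j) := by
  ext w
  simp only [Jset, Jfin, Finset.coe_image, Finset.coe_filter,
    Finset.mem_powerset, Set.mem_image]
  exact ⟨fun ⟨I, hI, hw⟩ => ⟨I, ⟨hI.2.1, hI⟩, hw.symm⟩, fun ⟨I, ⟨_, hI⟩, hw⟩ => ⟨I, hI, hw.symm⟩⟩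

theorem Jset_finite (j : ℕ) : (Jset d g lam j).Finite := by
  rw [Jset_eq_coe_Jfin]
  exact Finset.finite_toSet _

theorem Jset_subset_Mlat (j : ℕ) : Jset d g lam j ⊆ Mlat d lam g := by
  rintro _ ⟨I, hI, rfl⟩
  exact AddSubgroup.sum_mem _ fun i hi => by
    obtain ⟨h1, h2⟩ := Finset.mem_Icc.mp (hI.2.1 hi)
    exact E_mem_Mlat h1 h2

theorem Jset_nonneg (hnn : ∀ j, 1 ≤ j → j ≤ g → ∀ i, 0 ≤ lam j i) {w : Fin d → ℚ}
    (hw : w ∈ Jset d g lam j) : 0 ≤ w := by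
  obtain ⟨I, hI, rfl⟩ := hw
  refine Finset.sum_nonneg fun i hi => ?_
  obtain ⟨h1, h2⟩ := Finset.mem_Icc.mp (hI.2.1 hi)
  rcases le_or_gt i d with hid | hid
  · rw [E_of_le h1 hid]
    exact Pi.single_nonneg.mpr zero_le_one
  · rw [E_of_lt hid]
    exact hnn _ (by omega) (by omega)

theorem linearIndepOn_E_Icc : LinearIndepOn ℚ (E d lam) (Set.Icc 1 d) := by
  have hinj : Function.Injective fun l : Fin d => (l : ℕ) + 1 :=
    fun a b h => Fin.ext (Nat.succ_injective h)
  have hli : LinearIndepOn ℚ (E d lam) (Set.range fun l : Fin d => (l : ℕ) + 1) := by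
    rw [linearIndepOn_range_iff hinj]
    convert (Pi.basisFun ℚ (Fin d)).linearIndependent using 1
    funext l
    simp [E_succ]
  exact hli.mono fun i hi => ⟨⟨i - 1, by grind⟩, by grind⟩

theorem idxOk_Icc (hj : j ≤ d) : IdxOk d g lam j (Finset.Icc 1 j) := by
  refine ⟨by simp, fun i hi => ?_, ?_, ?_⟩
  · simp only [Finset.mem_Icc] at hi ⊢; omega
  · rw [Finset.filter_false_of_mem fun i hi => by simp only [Finset.mem_Icc] at hi; omega]
    simp
  · refine linearIndepOn_E_Icc.mono fun i hi => ?_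
    simp only [Finset.coe_Icc, Set.mem_Icc] at hi ⊢
    omega

theorem ordJ_le {w : Fin d → ℚ} (hw : w ∈ Jset d g lam j) : ordJ d g lam j ν ≤ pair d ν w := by
  rw [Jset_eq_coe_Jfin, Finset.mem_coe] at hw
  rw [ordJ, dif_pos ⟨w, hw⟩]
  exact Finset.min'_le _ _ (Finset.mem_image_of_mem _ hw)

theorem exists_mem_Jset_pair_eq_ordJ (hj : j ≤ d) :
    ∃ w ∈ Jset d g lam j, pair d ν w = ordJ d g lam j ν := by
  have hne : (Jfin d g lam j).Nonempty := by
    rw [← Finset.coe_nonempty, ← Jset_eq_coe_Jfin]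
    exact ⟨_, sum_mem_Jset (idxOk_Icc hj)⟩
  rw [ordJ, dif_pos hne]
  obtain ⟨w, hw, hpw⟩ := Finset.mem_image.mp (Finset.min'_mem _ (hne.image (pair d ν)))
  exact ⟨w, (Jset_eq_coe_Jfin j).symm ▸ hw, hpw⟩

theorem ordJ_zero : ordJ d g lam 0 ν = 0 := by
  obtain ⟨_, ⟨I, hI, rfl⟩, hw⟩ := exists_mem_Jset_pair_eq_ordJ (d := d) (g := g) (lam := lam)
    (ν := ν) (Nat.zero_le d)
  rw [← hw, Finset.card_eq_zero.mp hI.1, Finset.sum_empty, pair_eq_dotProduct, dotProduct_zero]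

theorem ordJ_nonneg (hnn : ∀ j, 1 ≤ j → j ≤ g → ∀ i, 0 ≤ lam j i) (hν : 0 ≤ ν) (hj : j ≤ d) :
    0 ≤ ordJ d g lam j ν := by
  obtain ⟨w, hw, hpw⟩ := exists_mem_Jset_pair_eq_ordJ (g := g) (lam := lam) (ν := ν) hj
  exact hpw ▸ dotProduct_nonneg_of_nonneg hν (Jset_nonneg hnn hw)

theorem exists_int_ordJ_eq (hν : ν ∈ Ndual d g lam) (hj : j ≤ d) :
    ∃ z : ℤ, ordJ d g lam j ν = z := by
  obtain ⟨w, hw, hpw⟩ := exists_mem_Jset_pair_eq_ordJ (g := g) (lam := lam) (ν := ν) hj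
  exact hpw ▸ hν w (Jset_subset_Mlat j hw)

theorem notMem_of_E_notMem_spanOf {I : Finset ℕ} {x : ℕ} (hx : E d lam x ∉ spanOf d lam I) :
    x ∉ I :=
  fun h => hx (Submodule.subset_span (Set.mem_image_of_mem _ h))

theorem IdxOk.erase {I : Finset ℕ} {x : ℕ} (h : IdxOk d g lam (j + 1) I) (hx : x ∈ I) :
    IdxOk d g lam j (I.erase x) := by
  obtain ⟨hc, hs, hf, hli⟩ := h
  refine ⟨by rw [Finset.card_erase_of_mem hx, hc]; rfl, (Finset.erase_subset _ _).trans hs,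
    (Finset.card_le_card (Finset.filter_subset_filter _ (Finset.erase_subset _ _))).trans hf, ?_⟩
  exact LinearIndepOn.mono hli (Finset.coe_subset.mpr (Finset.erase_subset _ _))

theorem IdxOk.insert_of_E_notMem_spanOf {I : Finset ℕ} {x : ℕ} (h : IdxOk d g lam j I)
    (hx1 : 1 ≤ x) (hxd : x ≤ d) (hx : E d lam x ∉ spanOf d lam I) :
    IdxOk d g lam (j + 1) (insert x I) := by
  obtain ⟨hc, hs, hf, hli⟩ := h
  have hxI := notMem_of_E_notMem_spanOf hx
  refine ⟨by rw [Finset.card_insert_of_notMem hxI, hc],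
    Finset.insert_subset (Finset.mem_Icc.mpr ⟨hx1, by omega⟩) hs,
    by rwa [Finset.filter_insert, if_neg (by omega)], ?_⟩
  have : LinearIndepOn ℚ (E d lam) (insert x (I : Set ℕ)) :=
    (linearIndepOn_insert hxI).mpr ⟨hli, hx⟩
  rwa [← Finset.coe_insert] at this

theorem card_filter_mem_spanOf_le {I : Finset ℕ} (hI : LinearIndepOn ℚ (E d lam) I)
    (I' : Finset ℕ) : (I.filter fun i => E d lam i ∈ spanOf d lam I').card ≤ I'.card := by
  set S := I.filter fun i => E d lam i ∈ spanOf d lam I'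
  have hS : LinearIndependent ℚ (fun i : S => E d lam i) :=
    hI.mono (Finset.coe_subset.mpr (Finset.filter_subset _ _))
  have hspan : Submodule.span ℚ (Set.range fun i : S => E d lam i) ≤ spanOf d lam I' :=
    Submodule.span_le.mpr <| Set.range_subset_iff.mpr fun i => (Finset.mem_filter.mp i.2).2
  calc S.card = Fintype.card S := (Fintype.card_coe S).symm
    _ ≤ Module.finrank ℚ (Submodule.span ℚ (Set.range fun i : S => E d lam i)) :=
      linearIndependent_iff_card_le_finrank_span.mp hS
    _ ≤ Module.finrank ℚ (spanOf d lam I') := Submodule.finrank_mono hspan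
    _ ≤ (I'.image (E d lam)).card := by
      rw [spanOf, ← Finset.coe_image]
      exact finrank_span_finset_le_card _
    _ ≤ I'.card := Finset.card_image_le

theorem IdxOk.exists_E_notMem_spanOf {I I' : Finset ℕ} (hI : IdxOk d g lam (j + 2) I)
    (hI' : IdxOk d g lam j I') : ∃ x ∈ I, x ≤ d ∧ E d lam x ∉ spanOf d lam I' := by
  obtain ⟨hc, -, hlam, hli⟩ := hI
  have hc' := hI'.1
  by_contra! h
  have hsub : I ⊆ (I.filter fun i => E d lam i ∈ spanOf d lam I') ∪
      I.filter fun i => d + 1 ≤ i := by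
    intro x hx
    by_cases hxd : x ≤ d
    · exact Finset.mem_union_left _ (Finset.mem_filter.mpr ⟨hx, h x hx hxd⟩)
    · exact Finset.mem_union_right _ (Finset.mem_filter.mpr ⟨hx, by omega⟩)
  have hcard := (Finset.card_le_card hsub).trans (Finset.card_union_le _ _)
  have hspan := card_filter_mem_spanOf_le hli I'
  omega

theorem IdxOk.exists_exchange {I I' : Finset ℕ} (hI : IdxOk d g lam (j + 2) I)
    (hI' : IdxOk d g lam j I') :
    ∃ I₁ I₂, IdxOk d g lam (j + 1) I₁ ∧ IdxOk d g lam (j + 1) I₂ ∧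
      ∑ i ∈ I₁, E d lam i + ∑ i ∈ I₂, E d lam i = ∑ i ∈ I, E d lam i + ∑ i ∈ I', E d lam i := by
  obtain ⟨x, hxI, hxd, hx⟩ := hI.exists_E_notMem_spanOf hI'
  have hx1 : 1 ≤ x := (Finset.mem_Icc.mp (hI.2.1 hxI)).1
  refine ⟨insert x I', I.erase x, hI'.insert_of_E_notMem_spanOf hx1 hxd hx, hI.erase hxI, ?_⟩
  rw [Finset.sum_insert (notMem_of_E_notMem_spanOf hx), Finset.sum_erase_eq_sub hxI]
  abel

theorem two_mul_ordJ_le (hj : j + 2 ≤ d) :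
    2 * ordJ d g lam (j + 1) ν ≤ ordJ d g lam (j + 2) ν + ordJ d g lam j ν := by
  obtain ⟨_, ⟨I, hI, rfl⟩, hIν⟩ := exists_mem_Jset_pair_eq_ordJ (ν := ν) hj
  obtain ⟨_, ⟨I', hI', rfl⟩, hI'ν⟩ :=
    exists_mem_Jset_pair_eq_ordJ (g := g) (lam := lam) (ν := ν) (by omega : j ≤ d)
  obtain ⟨I₁, I₂, h₁, h₂, hsum⟩ := hI.exists_exchange hI'
  have hpair := congrArg (pair d ν) hsum
  have h₁ν := ordJ_le (ν := ν) (sum_mem_Jset h₁)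
  have h₂ν := ordJ_le (ν := ν) (sum_mem_Jset h₂)
  simp only [pair_eq_dotProduct, dotProduct_add] at hpair hIν hI'ν h₁ν h₂ν
  linarith

theorem phiJ_succ : phiJ d g lam (j + 1) ν = ordJ d g lam (j + 1) ν - ordJ d g lam j ν := rfl

theorem phiJ_le_phiJ {i : ℕ} (hi : 1 ≤ i) (hij : i ≤ j) (hj : j ≤ d) :
    phiJ d g lam i ν ≤ phiJ d g lam j ν := by
  induction j, hij using Nat.le_induction with
  | base => exact le_rfl
  | succ j hij ih =>
    obtain ⟨m, rfl⟩ : ∃ m, j = m + 1 := ⟨j - 1, by omega⟩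
    have hconvex := two_mul_ordJ_le (g := g) (lam := lam) (ν := ν) (j := m) hj
    simp only [phiJ_succ] at ih ⊢
    linarith [ih (by omega)]

theorem ordJ_le_mul_phiJ {k : ℕ} (hjk : j ≤ k) (hk : k ≤ d) :
    ordJ d g lam j ν ≤ j * phiJ d g lam k ν := by
  induction j with
  | zero => simp [ordJ_zero]
  | succ j ih =>
    have hφ := phiJ_le_phiJ (g := g) (lam := lam) (ν := ν) (Nat.le_add_left 1 j) hjk hk
    rw [phiJ_succ] at hφ
    push_cast
    linarith [ih (by omega)]

theorem ordJ_mem_of_Acond (hnn : ∀ j, 1 ≤ j → j ≤ g → ∀ i, 0 ≤ lam j i) {s0 k : ℕ}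
    (hkd : k ≤ d) (hν : Acond d g lam s0 k ν) (hjk : j ≤ k) :
    ordJ d g lam j ν ∈ ((↑) : ℤ → ℚ) '' Set.Icc 0 (k * s0 : ℕ) := by
  obtain ⟨hN, hpos, hφ, -⟩ := hν
  have hν0 : 0 ≤ ν := fun l =>
    (pair_E_succ (lam := lam) l ▸ hpos (l + 1) (by omega) (by omega)).le
  obtain ⟨z, hz⟩ := exists_int_ordJ_eq hN (hjk.trans hkd)
  have h0 := ordJ_nonneg hnn hν0 (hjk.trans hkd)
  have hle : ordJ d g lam j ν ≤ (k * s0 : ℕ) :=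
    calc ordJ d g lam j ν ≤ j * phiJ d g lam k ν := ordJ_le_mul_phiJ hjk hkd
      _ ≤ j * s0 := by gcongr
      _ ≤ (k * s0 : ℕ) := by push_cast; gcongr
  rw [hz] at h0 hle ⊢
  exact ⟨z, ⟨by exact_mod_cast h0, by exact_mod_cast hle⟩, rfl⟩

end

theorem statement13_general (d g : ℕ) (lam : ℕ → Fin d → ℚ)
    (hnn : ∀ j, 1 ≤ j → j ≤ g → ∀ i, 0 ≤ lam j i)
    (s0 : ℕ) (k : ℕ) (hkd : k ≤ d) :
    Equivalence (fun ν ν' : {ν : Fin d → ℚ // Acond d g lam s0 k ν} =>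
      simRel d g lam k ν.1 ν'.1) ∧
    Finite (Quot (fun ν ν' : {ν : Fin d → ℚ // Acond d g lam s0 k ν} =>
      simRel d g lam k ν.1 ν'.1)) := by
  refine ⟨⟨fun _ _ _ _ => ⟨rfl, rfl⟩, fun h j h1 h2 => ⟨(h j h1 h2).1.symm, (h j h1 h2).2.symm⟩,
    fun h h' j h1 h2 => ⟨(h j h1 h2).1.trans (h' j h1 h2).1, (h j h1 h2).2.trans (h' j h1 h2).2⟩⟩,
    ?_⟩
  let invariants (ν : {ν // Acond d g lam s0 k ν}) (j : Set.Icc 1 k) : ℚ × Set (Fin d → ℚ) :=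
    (ordJ d g lam j ν.1, {w | w ∈ Jset d g lam j ∧ pair d ν.1 w = ordJ d g lam j ν.1})
  refine Quot.finite_of_finite_range invariants ?_
    fun a b hab j h1 h2 => Prod.ext_iff.mp (congrFun hab ⟨j, h1, h2⟩)
  refine (Set.Finite.pi fun j : Set.Icc 1 k =>
    ((Set.finite_Icc (0 : ℤ) (k * s0 : ℕ)).image ((↑) : ℤ → ℚ)).prod
      (Jset_finite (d := d) (g := g) (lam := lam) j).powerset).subset ?_
  rintro _ ⟨ν, rfl⟩
  exact Set.mem_univ_pi.mpr fun j =>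
    ⟨ordJ_mem_of_Acond hnn hkd ν.2 j.2.2, fun w hw => hw.1⟩

/-- The relation `∼` is an equivalence relation on `A_k(s_0)` with only finitely many
equivalence classes. -/
theorem statement13 (d g : ℕ) (lam : ℕ → Fin d → ℚ) (hd : 1 ≤ d) (hg : 1 ≤ g)
    (hnn : ∀ j, 1 ≤ j → j ≤ g → ∀ i, 0 ≤ lam j i)
    (hmono : ∀ j, 1 ≤ j → j < g → ∀ i, lam j i ≤ lam (j + 1) i)
    (hnotin : ∀ j, 1 ≤ j → j ≤ g → lam j ∉ Mlat d lam (j - 1))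
    (s0 : ℕ) (hs0 : 1 ≤ s0) (k : ℕ) (hk1 : 1 ≤ k) (hkd : k ≤ d) :
    Equivalence (fun ν ν' : {ν : Fin d → ℚ // Acond d g lam s0 k ν} =>
      simRel d g lam k ν.1 ν'.1) ∧
    Finite (Quot (fun ν ν' : {ν : Fin d → ℚ // Acond d g lam s0 k ν} =>
      simRel d g lam k ν.1 ν'.1)) :=
  statement13_general d g lam hnn s0 k hkd

end QO
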